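/- arXiv:1403.1963 — 5 statements merged into one kernel-verified Lean document; each statement's English description precedes it below -/
import Mathlib

section
/- Let (M, g, J, ω) be a closed almost Kähler 2n-manifold. Every closed primitive J-invariant 2-form is g-harmonic, so the subgroup H⁺_{J,0} of de Rham classes represented by closed primitive J-invariant 2-forms is isomorphic to the space of harmonic primitive J-invariant 2-forms. -/
/-- Let `(M, g, J, ω)` be a closed almost Kähler `2n`-manifold,
presented abstractly through its spaces of smooth forms in the relevant degrees,
the exterior differentials, Hodge star on 2-forms, `L²` inner products with
codifferential, the involution `P : α ↦ α(J·,J·)`, the primitivity operator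
`Ln1 = ω^{n-1} ∧ ·`, and `Lpow = (ω^{n-2}/(n-2)!) ∧ ·`, with
`*_g γ = -(ω^{n-2}/(n-2)!) ∧ γ` for primitive `J`-invariant `γ`.  Then every closed
primitive `J`-invariant 2-form is `g`-harmonic, and consequently the natural map
from the space of closed primitive `J`-invariant 2-forms to the de Rham cohomology
`H² = Ω²/dΩ¹` is injective, i.e. `H⁺_{J,0}` is isomorphic to the space of harmonic
primitive `J`-invariant 2-forms. -/
theorem stmt9
    (Ω1 Ω2 Ω3 Ωm2 Ωm1 Ωtop : Type*)
    [AddCommGroup Ω1] [Module ℝ Ω1] [AddCommGroup Ω2] [Module ℝ Ω2]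
    [AddCommGroup Ω3] [Module ℝ Ω3] [AddCommGroup Ωm2] [Module ℝ Ωm2]
    [AddCommGroup Ωm1] [Module ℝ Ωm1] [AddCommGroup Ωtop] [Module ℝ Ωtop]
    (d1 : Ω1 →ₗ[ℝ] Ω2) (d2 : Ω2 →ₗ[ℝ] Ω3) (dm2 : Ωm2 →ₗ[ℝ] Ωm1)
    (star2 : Ω2 →ₗ[ℝ] Ωm2)
    (P : Ω2 →ₗ[ℝ] Ω2) (hP : P ∘ₗ P = LinearMap.id)
    -- `Ln1 = ω^{n-1} ∧ ·` (primitivity), `Lpow = (ω^{n-2}/(n-2)!) ∧ ·`: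
    (Ln1 : Ω2 →ₗ[ℝ] Ωtop)
    (Lpow : Ω2 →ₗ[ℝ] Ωm2) (Lpow3 : Ω3 →ₗ[ℝ] Ωm1)
    (hcomm : dm2 ∘ₗ Lpow = Lpow3 ∘ₗ d2)
    -- for primitive `J`-invariant `γ`:  `*_g γ = -(ω^{n-2}/(n-2)!) ∧ γ`:
    (hstar : ∀ γ : Ω2, P γ = γ → Ln1 γ = 0 → star2 γ = -(Lpow γ))
    (inner1 : Ω1 →ₗ[ℝ] Ω1 →ₗ[ℝ] ℝ) (inner2 : Ω2 →ₗ[ℝ] Ω2 →ₗ[ℝ] ℝ)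
    (hpos2 : ∀ α : Ω2, α ≠ 0 → 0 < inner2 α α)
    (δ2 : Ω2 →ₗ[ℝ] Ω1)
    (hadj : ∀ (θ : Ω1) (α : Ω2), inner2 (d1 θ) α = inner1 θ (δ2 α))
    (hδ : ∀ α : Ω2, dm2 (star2 α) = 0 → δ2 α = 0) :
    -- closed primitive `J`-invariant forms are `g`-harmonic:
    (∀ γ : Ω2, P γ = γ → Ln1 γ = 0 → d2 γ = 0 → dm2 (star2 γ) = 0) ∧
    -- `H⁺_{J,0}` is isomorphic to the closed (= harmonic) primitive `J`-invariant forms: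
    Function.Injective
      (((LinearMap.range d1).mkQ).comp
        (LinearMap.ker d2 ⊓ LinearMap.ker (P - LinearMap.id) ⊓
          LinearMap.ker Ln1).subtype) := by
  have harm : ∀ γ : Ω2, P γ = γ → Ln1 γ = 0 → d2 γ = 0 → dm2 (star2 γ) = 0 := by
    intro γ hPγ hLγ hdγ
    rw [hstar γ hPγ hLγ, map_neg]
    have : dm2 (Lpow γ) = Lpow3 (d2 γ) := congrFun (congrArg DFunLike.coe hcomm) γ
    rw [this, hdγ, map_zero, neg_zero]
  refine ⟨harm, ?_⟩
  rw [injective_iff_map_eq_zero]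
  rintro ⟨γ, hmem⟩ h
  simp only [LinearMap.comp_apply, Submodule.subtype_apply, Submodule.mkQ_apply,
    Submodule.Quotient.mk_eq_zero] at h
  obtain ⟨θ, hθ⟩ := h
  obtain ⟨⟨hd, hPm⟩, hL⟩ := hmem
  have hPγ : P γ = γ := by
    have := hPm
    simp only [SetLike.mem_coe, LinearMap.mem_ker, LinearMap.sub_apply, LinearMap.id_apply, sub_eq_zero] at this
    exact this
  have hδγ : δ2 γ = 0 := hδ γ (harm γ hPγ hL hd)
  have hzero : γ = 0 := by
    by_contra hne
    have hpos := hpos2 γ hne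
    have : inner2 γ γ = 0 := by
      rw [← hθ, hadj, hθ, hδγ, map_zero]
    linarith
  exact Subtype.ext hzero
end

section
/- Let (M, g, J, ω) be a closed almost Kähler 2n-manifold and define P_J : Ω²₀ → Ω²₀ on primitive 2-forms by P_J(ψ) = Δ_g ψ - (1/n) g(Δ_g ψ, ω) ω. Then ker P_J equals the space of primitive g-harmonic 2-forms, i.e. ℋ²_g ∩ Ω²₀. -/
/-- Let `(M, g, J, ω)` be a closed almost Kähler `2n`-manifold,
presented abstractly: `Ω0` is the algebra of smooth functions with integration
functional `I`, `Ω1, Ω2, Ω3` the spaces of forms, `d` the exterior differential with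
codifferential `δ` (adjoint for the `L²` inner products `⟨α,β⟩ = ∫ g(α,β) dvol`),
`gp` the pointwise metric pairing on 2-forms (normalized by `g(ω,ω) = n`), `sm`
multiplication of a 2-form by a function, `Δ = dδ + δd` the Hodge Laplacian, and
`Ln1 = ω^{n-1} ∧ ·` cutting out the primitive 2-forms.  Define
`P_J(ψ) = Δψ - (1/n) g(Δψ, ω) ω` on primitive 2-forms.  Then `ker P_J` equals the
space of primitive `g`-harmonic 2-forms `ℋ²_g ∩ Ω²₀`. -/
theorem stmt10
    (n : ℕ) (hn : 1 ≤ n)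
    (Ω0 : Type*) [CommRing Ω0] [Algebra ℝ Ω0]
    (Ω1 Ω2 Ω3 Ωtop : Type*)
    [AddCommGroup Ω1] [Module ℝ Ω1] [AddCommGroup Ω2] [Module ℝ Ω2]
    [AddCommGroup Ω3] [Module ℝ Ω3] [AddCommGroup Ωtop] [Module ℝ Ωtop]
    -- integration:
    (I : Ω0 →ₗ[ℝ] ℝ)
    -- pointwise metric pairing on 2-forms, symmetric, positive (after integration):
    (gp : Ω2 →ₗ[ℝ] Ω2 →ₗ[ℝ] Ω0)
    (hgpsym : ∀ α β : Ω2, gp α β = gp β α)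
    (hpos2 : ∀ α : Ω2, α ≠ 0 → 0 < I (gp α α))
    -- multiplication of 2-forms by functions:
    (sm : Ω0 →ₗ[ℝ] Ω2 →ₗ[ℝ] Ω2)
    (hsm : ∀ (f : Ω0) (α β : Ω2), gp (sm f α) β = f * gp α β)
    -- the symplectic form, normalized so that `g(ω,ω) = n`:
    (ω : Ω2) (hωω : gp ω ω = algebraMap ℝ Ω0 (n : ℝ))
    -- exterior differential and codifferential, with `L²` adjointness:
    (d1 : Ω1 →ₗ[ℝ] Ω2) (d2 : Ω2 →ₗ[ℝ] Ω3)
    (δ2 : Ω2 →ₗ[ℝ] Ω1) (δ3 : Ω3 →ₗ[ℝ] Ω2)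
    (inner1 : Ω1 →ₗ[ℝ] Ω1 →ₗ[ℝ] ℝ) (inner3 : Ω3 →ₗ[ℝ] Ω3 →ₗ[ℝ] ℝ)
    (hpos1 : ∀ θ : Ω1, θ ≠ 0 → 0 < inner1 θ θ)
    (hpos3 : ∀ β : Ω3, β ≠ 0 → 0 < inner3 β β)
    (hadj1 : ∀ (θ : Ω1) (α : Ω2), I (gp (d1 θ) α) = inner1 θ (δ2 α))
    (hadj2 : ∀ (α : Ω2) (β : Ω3), inner3 (d2 α) β = I (gp α (δ3 β)))
    -- `Ln1 = ω^{n-1} ∧ ·`; primitive 2-forms are pointwise orthogonal to `ω`: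
    (Ln1 : Ω2 →ₗ[ℝ] Ωtop)
    (hprim : ∀ ψ : Ω2, Ln1 ψ = 0 → gp ψ ω = 0) :
    -- `ker P_J = ℋ²_g ∩ Ω²₀` (with `Δ = d δ + δ d` the Hodge Laplacian):
    ∀ ψ : Ω2, Ln1 ψ = 0 →
      ((d1 (δ2 ψ) + δ3 (d2 ψ)) -
          (1/(n:ℝ)) • sm (gp (d1 (δ2 ψ) + δ3 (d2 ψ)) ω) ω = 0 ↔
        d2 ψ = 0 ∧ δ2 ψ = 0) := by
  intro ψ hψ
  constructor
  · intro h
    set Δ : Ω2 := d1 (δ2 ψ) + δ3 (d2 ψ) with hΔ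
    have hωψ : gp ω ψ = 0 := by rw [hgpsym]; exact hprim ψ hψ
    have hΔeq : Δ = (1/(n:ℝ)) • sm (gp Δ ω) ω := sub_eq_zero.mp h
    have hzero : I (gp Δ ψ) = 0 := by
      rw [hΔeq]
      simp [hsm, hωψ]
    have e1 : I (gp (d1 (δ2 ψ)) ψ) = inner1 (δ2 ψ) (δ2 ψ) := hadj1 _ _
    have e2 : I (gp (δ3 (d2 ψ)) ψ) = inner3 (d2 ψ) (d2 ψ) := by
      rw [hgpsym]; exact (hadj2 ψ (d2 ψ)).symm
    have hsum : inner1 (δ2 ψ) (δ2 ψ) + inner3 (d2 ψ) (d2 ψ) = 0 := by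
      have : I (gp Δ ψ) = inner1 (δ2 ψ) (δ2 ψ) + inner3 (d2 ψ) (d2 ψ) := by
        rw [hΔ, map_add, LinearMap.add_apply, map_add, e1, e2]
      linarith [hzero]
    have h1' : 0 ≤ inner1 (δ2 ψ) (δ2 ψ) := by
      rcases eq_or_ne (δ2 ψ) 0 with h0 | h0
      · simp [h0]
      · exact (hpos1 _ h0).le
    have h3' : 0 ≤ inner3 (d2 ψ) (d2 ψ) := by
      rcases eq_or_ne (d2 ψ) 0 with h0 | h0
      · simp [h0]
      · exact (hpos3 _ h0).le
    constructor
    · by_contra hc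
      have := hpos3 _ hc
      linarith
    · by_contra hc
      have := hpos1 _ hc
      linarith
  · rintro ⟨hd, hδ⟩
    simp [hd, hδ]
end

section
/- Let (M, g, J, ω) be a closed almost Kähler 2n-manifold. Every J-anti-invariant harmonic 2-form and every primitive J-invariant harmonic 2-form is both d+d^Λ-harmonic and dd^Λ-harmonic; i.e. ℋ⁻_J ⊕ ℋ⁺_{J,0} ⊆ ℋ⁻_{d+d^Λ}(M) ∩ ℋ⁻_{dd^Λ}(M). -/
/-- Let `(M, g, J, ω)` be a closed almost Kähler `2n`-manifold,
presented abstractly through its spaces of forms in degrees `1, 2, 3, 2n-3, 2n-2, 2n-1`,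
the exterior differential `d`, the symplectic star `*_s` and the Hodge star `*_g`
(in the relevant degrees), the involution `P`, `Ln1 = ω^{n-1}∧·` (primitivity) and
`Lpow = (ω^{n-2}/(n-2)!)∧·`, subject to the standard identities (Weil's identity for
primitive forms, `d(Lpow·) = Lpow(d·)` since `dω = 0`, the eigen-relations of `*_g` on
`J`-(anti-)invariant primitive forms).  With `d^Λ = (-1)^{k+1} *_s d *_s`,
`(d^Λ)* = *_g d^Λ *_g` and `(dd^Λ)* = -*_g d d^Λ *_g`, the sum `α = β + γ` of a harmonic
`J`-anti-invariant form `β` and a harmonic primitive `J`-invariant form `γ` is both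
`d+d^Λ`-harmonic and `dd^Λ`-harmonic (and primitive); i.e.
`ℋ⁻_J ⊕ ℋ⁺_{J,0} ⊆ ℋ⁻_{d+d^Λ}(M) ∩ ℋ⁻_{dd^Λ}(M)`. -/
theorem stmt13
    (Ω1 Ω2 Ω3 Ωp3 Ωp2 Ωp1 Ωtop : Type*)
    [AddCommGroup Ω1] [Module ℝ Ω1] [AddCommGroup Ω2] [Module ℝ Ω2]
    [AddCommGroup Ω3] [Module ℝ Ω3] [AddCommGroup Ωp3] [Module ℝ Ωp3]
    [AddCommGroup Ωp2] [Module ℝ Ωp2] [AddCommGroup Ωp1] [Module ℝ Ωp1]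
    [AddCommGroup Ωtop] [Module ℝ Ωtop]
    -- differentials (Ωp3, Ωp2, Ωp1 are the forms of degrees 2n-3, 2n-2, 2n-1):
    (d1 : Ω1 →ₗ[ℝ] Ω2) (d2 : Ω2 →ₗ[ℝ] Ω3)
    (dp3 : Ωp3 →ₗ[ℝ] Ωp2) (dp2 : Ωp2 →ₗ[ℝ] Ωp1)
    -- symplectic stars:
    (ss2 : Ω2 →ₗ[ℝ] Ωp2) (ssp2 : Ωp2 →ₗ[ℝ] Ω2)
    (ss3 : Ω3 →ₗ[ℝ] Ωp3) (ssp1 : Ωp1 →ₗ[ℝ] Ω1)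
    -- Hodge stars:
    (sg2 : Ω2 →ₗ[ℝ] Ωp2) (sgp2 : Ωp2 →ₗ[ℝ] Ω2)
    (sgp3 : Ωp3 →ₗ[ℝ] Ω3) (sgp1 : Ωp1 →ₗ[ℝ] Ω1)
    -- involution, primitivity and Lefschetz operators:
    (P : Ω2 →ₗ[ℝ] Ω2) (hP : P ∘ₗ P = LinearMap.id)
    (Ln1 : Ω2 →ₗ[ℝ] Ωtop)
    (Lpow : Ω2 →ₗ[ℝ] Ωp2) (Lpow3 : Ω3 →ₗ[ℝ] Ωp1)
    -- structural identities:
    (hanti : ∀ β : Ω2, P β = -β → Ln1 β = 0)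
    (hcomm : dp2 ∘ₗ Lpow = Lpow3 ∘ₗ d2)
    (hss2 : ∀ α : Ω2, Ln1 α = 0 → ss2 α = -(Lpow α))
    (hssp2 : ∀ α : Ω2, Ln1 α = 0 → ssp2 (Lpow α) = -α)
    (hsgA : ∀ β : Ω2, P β = -β → sg2 β = Lpow β)
    (hsgI : ∀ γ : Ω2, P γ = γ → Ln1 γ = 0 → sg2 γ = -(Lpow γ)) :
    -- if `β` is harmonic `J`-anti-invariant and `γ` harmonic primitive `J`-invariant:
    ∀ β γ : Ω2,
      P β = -β → d2 β = 0 → dp2 (sg2 β) = 0 →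
      P γ = γ → Ln1 γ = 0 → d2 γ = 0 → dp2 (sg2 γ) = 0 →
      -- then `α = β + γ` is primitive, `d+d^Λ`-harmonic and `dd^Λ`-harmonic:
      (Ln1 (β + γ) = 0) ∧
      -- `d+d^Λ`-harmonic:  `dα = 0`, `d^Λ α = 0`, `(dd^Λ)* α = 0`:
      (d2 (β + γ) = 0) ∧
      (-(ssp1 (dp2 (ss2 (β + γ)))) = 0) ∧
      (-(sgp2 (dp3 (-(ss3 (d2 (ssp2 (sg2 (β + γ)))))))) = 0) ∧
      -- `dd^Λ`-harmonic:  `d*α = 0`, `(d^Λ)* α = 0`, `dd^Λ α = 0`: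
      (-(sgp1 (dp2 (sg2 (β + γ)))) = 0) ∧
      (sgp3 (-(ss3 (d2 (ssp2 (sg2 (β + γ)))))) = 0) ∧
      (d1 (-(ssp1 (dp2 (ss2 (β + γ))))) = 0) := by
  intro β γ hβP hβd hβdg hγP hγL hγd hγdg
  have hβL : Ln1 β = 0 := hanti β hβP
  have hL : Ln1 (β + γ) = 0 := by simp [hβL, hγL]
  have hd : d2 (β + γ) = 0 := by simp [hβd, hγd]
  -- d^Λ (β+γ) = 0
  have hss : ss2 (β + γ) = -(Lpow (β + γ)) := hss2 _ hL
  have hdpLpow : dp2 (Lpow (β + γ)) = 0 := by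
    have := congrArg (fun f => f (β + γ)) hcomm
    simpa [hd] using this
  have hdΛ : -(ssp1 (dp2 (ss2 (β + γ)))) = 0 := by
    rw [hss, map_neg, hdpLpow]; simp
  -- sg2 (β+γ) = Lpow β - Lpow γ
  have hsg : sg2 (β + γ) = Lpow β - Lpow γ := by
    rw [map_add, hsgA β hβP, hsgI γ hγP hγL]; abel
  have hssp : ssp2 (sg2 (β + γ)) = -β + γ := by
    rw [hsg, map_sub, hssp2 β hβL, hssp2 γ hγL]; abel
  have hdssp : d2 (ssp2 (sg2 (β + γ))) = 0 := by
    rw [hssp]; simp [hβd, hγd]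
  have hdgsum : dp2 (sg2 (β + γ)) = 0 := by
    rw [map_add, map_add, hβdg, hγdg, add_zero]
  refine ⟨hL, hd, hdΛ, ?_, ?_, ?_, ?_⟩
  · rw [hdssp]; simp
  · rw [hdgsum]; simp
  · rw [hdssp]; simp
  · rw [hdΛ]; simp
end

section
/- On a closed almost Kähler 4-manifold (M, g, J, ω), any d+d^Λ-harmonic 2-form α satisfies (1/2)(1 + *_s)α = cω for a constant c ∈ ℝ, where *_s is the symplectic star; i.e. the Ω²₁-component of α is a constant multiple of ω. -/
/-- On a closed almost Kähler 4-manifold `(M, g, J, ω)` (presented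
abstractly: `Ω0` the smooth functions on the connected manifold `M`, `Ω1, Ω2, Ω3` the
forms, `d` the exterior differential, `*_s` the symplectic star — an involution on
2-forms — and `*_g` the Hodge star on 2-forms; `(1/2)(1+*_s)` projects a 2-form onto
its `Ω²₁ = {fω}` component, `d(fω) = df ∧ ω`, and `· ∧ ω` is injective on 1-forms),
any `d+d^Λ`-harmonic 2-form `α` satisfies `(1/2)(1 + *_s)α = c·ω` for a constant
`c ∈ ℝ`: the `Ω²₁`-component of `α` is a constant multiple of `ω`. -/
theorem stmt16
    (Ω0 Ω1 Ω2 Ω3 : Type*)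
    [AddCommGroup Ω0] [Module ℝ Ω0] [AddCommGroup Ω1] [Module ℝ Ω1]
    [AddCommGroup Ω2] [Module ℝ Ω2] [AddCommGroup Ω3] [Module ℝ Ω3]
    (d0 : Ω0 →ₗ[ℝ] Ω1) (d1 : Ω1 →ₗ[ℝ] Ω2) (d2 : Ω2 →ₗ[ℝ] Ω3)
    -- the symplectic star (`Ω2 → Ω2` and `Ω3 → Ω1` in dimension 4):
    (ss2 : Ω2 →ₗ[ℝ] Ω2) (ss3 : Ω3 →ₗ[ℝ] Ω1)
    (hss : ss2 ∘ₗ ss2 = LinearMap.id) (hss3 : Function.Injective ss3)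
    -- the Hodge star on 2-forms:
    (sg2 : Ω2 →ₗ[ℝ] Ω2)
    -- multiplication of 2-forms by functions, the function `1`, the symplectic form:
    (sm : Ω0 →ₗ[ℝ] Ω2 →ₗ[ℝ] Ω2) (one : Ω0) (ω : Ω2) (hone : sm one ω = ω)
    -- `(1/2)(1+*_s)` projects onto `Ω²₁ = {fω}`:
    (hproj : ∀ α : Ω2, ∃ f : Ω0, (1/2 : ℝ) • (α + ss2 α) = sm f ω)
    -- Leibniz rule and `dω = 0`:  `d(fω) = df ∧ ω`:
    (wedgeω : Ω1 →ₗ[ℝ] Ω3)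
    (hleib : ∀ f : Ω0, d2 (sm f ω) = wedgeω (d0 f))
    -- nondegeneracy of `ω`:  `· ∧ ω` is injective on 1-forms:
    (hwinj : Function.Injective wedgeω)
    -- connectedness: functions with `df = 0` are the constants:
    (hconn : ∀ f : Ω0, d0 f = 0 → ∃ c : ℝ, f = c • one) :
    -- any `d+d^Λ`-harmonic 2-form `α`:
    ∀ α : Ω2, d2 α = 0 → -(ss3 (d2 (ss2 α))) = 0 →
      -(sg2 (d1 (-(ss3 (d2 (ss2 (sg2 α))))))) = 0 →
      ∃ c : ℝ, (1/2 : ℝ) • (α + ss2 α) = c • ω := by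
  intro α hdα hdΛ _
  have hss0 : d2 (ss2 α) = 0 := hss3 (by simpa using neg_eq_zero.mp hdΛ)
  obtain ⟨f, hf⟩ := hproj α
  have hdf : d0 f = 0 := by
    apply hwinj
    rw [map_zero, ← hleib, ← hf]
    simp [hdα, hss0]
  obtain ⟨c, hc⟩ := hconn f hdf
  exact ⟨c, by rw [hf, hc, map_smul, LinearMap.smul_apply, hone]⟩
end

section
/- With J on T⁴ as above (Jdx¹ = m dx², Jdx² = -(1/m)dx¹, Jdx³ = dx⁴, Jdx⁴ = -dx³, m = m(x²,x⁴) > 0), the J-anti-invariant 2-forms are spanned pointwise by ψ₁ = dx¹∧dx³ - m dx²∧dx⁴ and ψ₂ = dx¹∧dx⁴ + m dx²∧dx³, and dψ₁ = 0 while dψ₂ = m₄ dx²∧dx³∧dx⁴ where m₄ = ∂m/∂x⁴. -/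
/-- `ψ₁ = dx¹∧dx³ - m dx²∧dx⁴` at the point `x`, as a bilinear form on tangent vectors. -/
noncomputable def psi1 (m : (Fin 4 → ℝ) → ℝ) (x : Fin 4 → ℝ) :
    (Fin 4 → ℝ) →ₗ[ℝ] (Fin 4 → ℝ) →ₗ[ℝ] ℝ :=
  LinearMap.mk₂ ℝ
    (fun u v => (u 0 * v 2 - u 2 * v 0) - m x * (u 1 * v 3 - u 3 * v 1))
    (by intros; simp only [Pi.add_apply]; ring)
    (by intros; simp only [Pi.smul_apply, smul_eq_mul]; ring)
    (by intros; simp only [Pi.add_apply]; ring)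
    (by intros; simp only [Pi.smul_apply, smul_eq_mul]; ring)

/-- `ψ₂ = dx¹∧dx⁴ + m dx²∧dx³` at the point `x`, as a bilinear form on tangent vectors. -/
noncomputable def psi2 (m : (Fin 4 → ℝ) → ℝ) (x : Fin 4 → ℝ) :
    (Fin 4 → ℝ) →ₗ[ℝ] (Fin 4 → ℝ) →ₗ[ℝ] ℝ :=
  LinearMap.mk₂ ℝ
    (fun u v => (u 0 * v 3 - u 3 * v 0) + m x * (u 1 * v 2 - u 2 * v 1))
    (by intros; simp only [Pi.add_apply]; ring)
    (by intros; simp only [Pi.smul_apply, smul_eq_mul]; ring)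
    (by intros; simp only [Pi.add_apply]; ring)
    (by intros; simp only [Pi.smul_apply, smul_eq_mul]; ring)

/-- The exterior derivative of a (pointwise) 2-form `Ψ` on `ℝ⁴`, evaluated on constant
vector fields `u, v, w`:  `dΨ(u,v,w) = ∂_u Ψ(v,w) - ∂_v Ψ(u,w) + ∂_w Ψ(u,v)`. -/
noncomputable def extDer2 (Ψ : (Fin 4 → ℝ) → (Fin 4 → ℝ) →ₗ[ℝ] (Fin 4 → ℝ) →ₗ[ℝ] ℝ)
    (x u v w : Fin 4 → ℝ) : ℝ :=
  fderiv ℝ (fun y => Ψ y v w) x u - fderiv ℝ (fun y => Ψ y u w) x v +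
    fderiv ℝ (fun y => Ψ y u v) x w


noncomputable def ee (i : Fin 4) : Fin 4 → ℝ := Pi.single i 1

lemma ee_decomp (u : Fin 4 → ℝ) : u = u 0 • ee 0 + u 1 • ee 1 + u 2 • ee 2 + u 3 • ee 3 := by
  funext i; fin_cases i <;> simp [ee, Pi.single_apply]

lemma fderiv_dir_eq_zero (m : (Fin 4 → ℝ) → ℝ) (hsmooth : ContDiff ℝ (⊤ : ℕ∞) m)
    (hdep : ∀ x y : Fin 4 → ℝ, x 1 = y 1 → x 3 = y 3 → m x = m y)
    (x : Fin 4 → ℝ) (i : Fin 4) (hi1 : i ≠ 1) (hi3 : i ≠ 3) :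
    fderiv ℝ m x (ee i) = 0 := by
  have hm : HasFDerivAt m (fderiv ℝ m x) x := (hsmooth.differentiable (by simp) x).hasFDerivAt
  have hm' : HasFDerivAt m (fderiv ℝ m x) ((0:ℝ) • ee i + x) := by
    simpa using hm
  have hc' : HasDerivAt (fun t : ℝ => t • ee i + x) (ee i) 0 := by
    simpa using ((hasDerivAt_id (0:ℝ)).smul_const (ee i)).add_const x
  have hcomp : HasDerivAt (fun t : ℝ => m (t • ee i + x))
      (fderiv ℝ m x (ee i)) 0 := by
    exact hm'.comp_hasDerivAt 0 hc'
  have hconst : (fun t : ℝ => m (t • ee i + x)) = fun _ => m x := by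
    funext t
    exact hdep _ _ (by simp [ee, Pi.single_apply, (Ne.symm hi1)])
      (by simp [ee, Pi.single_apply, (Ne.symm hi3)])
  rw [hconst] at hcomp
  exact ((hasDerivAt_const (0:ℝ) (m x)).unique hcomp).symm

lemma fderiv_decomp (m : (Fin 4 → ℝ) → ℝ) (hsmooth : ContDiff ℝ (⊤ : ℕ∞) m)
    (hdep : ∀ x y : Fin 4 → ℝ, x 1 = y 1 → x 3 = y 3 → m x = m y)
    (x u : Fin 4 → ℝ) :
    fderiv ℝ m x u = fderiv ℝ m x (ee 1) * u 1 + fderiv ℝ m x (ee 3) * u 3 := by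
  have h0 : fderiv ℝ m x (ee 0) = 0 :=
    fderiv_dir_eq_zero m hsmooth hdep x 0 (by decide) (by decide)
  have h2 : fderiv ℝ m x (ee 2) = 0 :=
    fderiv_dir_eq_zero m hsmooth hdep x 2 (by decide) (by decide)
  conv_lhs => rw [ee_decomp u]
  simp [h0, h2, mul_comm]

lemma fderiv_affine (m : (Fin 4 → ℝ) → ℝ) (hsmooth : ContDiff ℝ (⊤ : ℕ∞) m)
    (x u : Fin 4 → ℝ) (A c : ℝ) :
    fderiv ℝ (fun y => A + m y * c) x u = c * fderiv ℝ m x u := by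
  have hm : HasFDerivAt m (fderiv ℝ m x) x := (hsmooth.differentiable (by simp) x).hasFDerivAt
  have : HasFDerivAt (fun y => A + m y * c) (c • fderiv ℝ m x) x := by
    simpa [smul_smul, mul_comm] using ((hm.mul_const c).const_add A)
  rw [this.fderiv]; simp [mul_comm]

/-- With `J` on `T⁴` as in the preceding statement
(`Jdx¹ = m dx²`, `Jdx² = -(1/m)dx¹`, `Jdx³ = dx⁴`, `Jdx⁴ = -dx³`, `m = m(x²,x⁴) > 0`),
the `J`-anti-invariant 2-forms are spanned pointwise by `ψ₁ = dx¹∧dx³ - m dx²∧dx⁴` and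
`ψ₂ = dx¹∧dx⁴ + m dx²∧dx³`, and `dψ₁ = 0` while `dψ₂ = m₄ dx²∧dx³∧dx⁴`,
`m₄ = ∂m/∂x⁴`. -/
theorem stmt18
    (m : (Fin 4 → ℝ) → ℝ)
    (hsmooth : ContDiff ℝ (⊤ : ℕ∞) m)
    (hpos : ∀ x, 0 < m x)
    (hperiodic : ∀ (x : Fin 4 → ℝ) (k : Fin 4 → ℤ), m (x + fun i => (k i : ℝ)) = m x)
    (hdep : ∀ x y : Fin 4 → ℝ, x 1 = y 1 → x 3 = y 3 → m x = m y)
    (J : (Fin 4 → ℝ) → (Fin 4 → ℝ) →ₗ[ℝ] (Fin 4 → ℝ))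
    (hJ : ∀ (x v : Fin 4 → ℝ),
      J x v = ![-(m x) * v 1, (m x)⁻¹ * v 0, -(v 3), v 2]) :
    -- pointwise, the `J`-anti-invariant 2-forms are spanned by `ψ₁` and `ψ₂`:
    (∀ x : Fin 4 → ℝ,
      {B : (Fin 4 → ℝ) →ₗ[ℝ] (Fin 4 → ℝ) →ₗ[ℝ] ℝ |
          (∀ u, B u u = 0) ∧ ∀ u v, B (J x u) (J x v) = -(B u v)} =
        ↑(Submodule.span ℝ {psi1 m x, psi2 m x})) ∧
    -- `dψ₁ = 0`:
    (∀ x u v w : Fin 4 → ℝ, extDer2 (psi1 m) x u v w = 0) ∧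
    -- `dψ₂ = m₄ dx²∧dx³∧dx⁴`:
    (∀ x u v w : Fin 4 → ℝ,
      extDer2 (psi2 m) x u v w =
        fderiv ℝ m x (Pi.single 3 1) *
          (u 1 * (v 2 * w 3 - v 3 * w 2) - v 1 * (u 2 * w 3 - u 3 * w 2) +
            w 1 * (u 2 * v 3 - u 3 * v 2))) := by

  refine ⟨?_, ?_, ?_⟩
  · intro x
    have hM : m x ≠ 0 := ne_of_gt (hpos x)
    ext B
    simp only [Set.mem_setOf_eq, SetLike.mem_coe]
    constructor
    · rintro ⟨halt, hanti⟩
      have hskew : ∀ u v, B v u = -(B u v) := by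
        intro u v
        have h := halt (u + v)
        have h1 := halt u
        have h2 := halt v
        simp only [map_add, LinearMap.add_apply] at h
        linarith
      have hJ0 : J x (ee 0) = (m x)⁻¹ • ee 1 := by
        rw [hJ]; funext i; fin_cases i <;> simp [ee, Pi.single_apply]
      have hJ1 : J x (ee 1) = -(m x • ee 0) := by
        rw [hJ]; funext i; fin_cases i <;> simp [ee, Pi.single_apply]
      have hJ2 : J x (ee 2) = ee 3 := by
        rw [hJ]; funext i; fin_cases i <;> simp [ee, Pi.single_apply]
      have hJ3 : J x (ee 3) = -(ee 2) := by
        rw [hJ]; funext i; fin_cases i <;> simp [ee, Pi.single_apply]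
      have r01 : B (ee 0) (ee 1) = 0 := by
        have h := hanti (ee 0) (ee 1)
        rw [hJ0, hJ1] at h
        simp only [map_smul, map_neg, LinearMap.smul_apply, LinearMap.neg_apply,
          smul_eq_mul, hskew (ee 0) (ee 1)] at h
        field_simp at h
        linarith
      have r23 : B (ee 2) (ee 3) = 0 := by
        have h := hanti (ee 2) (ee 3)
        rw [hJ2, hJ3] at h
        simp only [map_neg, LinearMap.neg_apply, hskew (ee 2) (ee 3)] at h
        linarith
      have r13 : B (ee 1) (ee 3) = -(m x * B (ee 0) (ee 2)) := by
        have h := hanti (ee 0) (ee 2)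
        rw [hJ0, hJ2] at h
        simp only [map_smul, LinearMap.smul_apply, smul_eq_mul] at h
        field_simp at h
        linarith
      have r12 : B (ee 1) (ee 2) = m x * B (ee 0) (ee 3) := by
        have h := hanti (ee 0) (ee 3)
        rw [hJ0, hJ3] at h
        simp only [map_smul, map_neg, LinearMap.smul_apply, LinearMap.neg_apply,
          smul_eq_mul] at h
        field_simp at h
        linarith
      refine Submodule.mem_span_pair.mpr ⟨B (ee 0) (ee 2), B (ee 0) (ee 3), ?_⟩
      apply LinearMap.ext₂
      intro u v
      have key : B u v =
          B (ee 0) (ee 2) * (u 0 * v 2 - u 2 * v 0)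
          + B (ee 0) (ee 3) * (u 0 * v 3 - u 3 * v 0)
          - m x * B (ee 0) (ee 2) * (u 1 * v 3 - u 3 * v 1)
          + m x * B (ee 0) (ee 3) * (u 1 * v 2 - u 2 * v 1) := by
        conv_lhs => rw [ee_decomp u, ee_decomp v]
        simp only [map_add, map_smul, LinearMap.add_apply, LinearMap.smul_apply, smul_eq_mul]
        rw [halt (ee 0), halt (ee 1), halt (ee 2), halt (ee 3), r01, r23, r13, r12,
          hskew (ee 0) (ee 1), hskew (ee 0) (ee 2), hskew (ee 0) (ee 3),
          hskew (ee 1) (ee 2), hskew (ee 1) (ee 3), hskew (ee 2) (ee 3),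
          r01, r23, r13, r12]
        ring
      rw [key]
      simp only [LinearMap.add_apply, LinearMap.smul_apply, smul_eq_mul,
        psi1, psi2, LinearMap.mk₂_apply]
      ring
    · intro hB
      obtain ⟨c, d, rfl⟩ := Submodule.mem_span_pair.mp hB
      constructor
      · intro u
        simp only [LinearMap.add_apply, LinearMap.smul_apply, smul_eq_mul,
          psi1, psi2, LinearMap.mk₂_apply]
        ring
      · intro u v
        simp only [LinearMap.add_apply, LinearMap.smul_apply, smul_eq_mul,
          psi1, psi2, LinearMap.mk₂_apply, hJ, Matrix.cons_val_zero, Matrix.cons_val_one,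
          Matrix.head_cons, Matrix.cons_val_two, Matrix.tail_cons, Matrix.cons_val_three]
        field_simp
        ring
  · intro x u v w
    have hc : ∀ a b : Fin 4 → ℝ, (fun y => psi1 m y a b) =
        fun y => ((a 0 * b 2 - a 2 * b 0) + m y * (-(a 1 * b 3 - a 3 * b 1))) := by
      intro a b; funext y
      simp only [psi1, LinearMap.mk₂_apply]; ring
    rw [extDer2, hc u v, hc u w, hc v w, fderiv_affine m hsmooth,
      fderiv_affine m hsmooth, fderiv_affine m hsmooth,
      fderiv_decomp m hsmooth hdep x u, fderiv_decomp m hsmooth hdep x v,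
      fderiv_decomp m hsmooth hdep x w]
    ring
  · intro x u v w
    have hc : ∀ a b : Fin 4 → ℝ, (fun y => psi2 m y a b) =
        fun y => ((a 0 * b 3 - a 3 * b 0) + m y * (a 1 * b 2 - a 2 * b 1)) := by
      intro a b; funext y
      simp only [psi2, LinearMap.mk₂_apply]
    rw [extDer2, hc u v, hc u w, hc v w, fderiv_affine m hsmooth,
      fderiv_affine m hsmooth, fderiv_affine m hsmooth,
      fderiv_decomp m hsmooth hdep x u, fderiv_decomp m hsmooth hdep x v,
      fderiv_decomp m hsmooth hdep x w]
    have : fderiv ℝ m x (Pi.single 3 1) = fderiv ℝ m x (ee 3) := rfl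
    rw [this]
    ring
end
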